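/- arXiv:2406.18876 — 5 statements merged into one kernel-verified Lean document; each statement's English description precedes it below -/
import Mathlib

section
/- Let f : M → M and g : N → N be R-module homomorphisms that are positively triangular with respect to ordered bases B = ({v_i | i ∈ I}, ≺) and C = ({w_j | j ∈ J}, ◁) respectively. Then f ⊗ g : M ⊗ N → M ⊗ N is positively triangular with respect to the ordered basis B ⊗ C, whose basis is {v_i ⊗ w_j} indexed by I × J with the lexicographic order. -/
open TensorProduct

/-- `f` is positively triangular with respect to a basis `b` of `M` and a
(strict) order `lt` on the index type: there is an `lt`-preserving map `η` such that
`f (b i) = λ i • b (η i) + (terms at indices strictly `lt`-above `η i`)` with `λ i > 0`. -/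
def PosTriangular {R M ι : Type*} [CommRing R] [LinearOrder R] [IsStrictOrderedRing R] [AddCommGroup M] [Module R M]
    (b : Module.Basis ι R M) (lt : ι → ι → Prop) (f : M →ₗ[R] M) : Prop :=
  ∃ η : ι → ι, (∀ p q, lt p q → lt (η p) (η q)) ∧
    ∀ i : ι, 0 < b.repr (f (b i)) (η i) ∧
      ∀ j : ι, lt j (η i) → b.repr (f (b i)) j = 0

/-- If `f` and `g` are positively triangular with respect to ordered bases `bM` and `bN`,
then `f ⊗ g` is positively triangular with respect to the tensor ordered basis
`{v i ⊗ w j}` indexed by `I × J` with the lexicographic order. -/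
theorem stmt2 {R M N I J : Type*} [CommRing R] [LinearOrder R] [IsStrictOrderedRing R]
    [AddCommGroup M] [Module R M] [AddCommGroup N] [Module R N]
    [LinearOrder I] [LinearOrder J]
    (bM : Module.Basis I R M) (bN : Module.Basis J R N)
    (f : M →ₗ[R] M) (g : N →ₗ[R] N)
    (hf : PosTriangular bM (· < ·) f) (hg : PosTriangular bN (· < ·) g) :
    PosTriangular (bM.tensorProduct bN)
      (Prod.Lex (· < ·) (· < ·)) (TensorProduct.map f g) := by
  obtain ⟨η, hηmono, hη⟩ := hf
  obtain ⟨ξ, hξmono, hξ⟩ := hg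
  refine ⟨fun p => (η p.1, ξ p.2), ?_, ?_⟩
  · rintro ⟨p1, p2⟩ ⟨q1, q2⟩ h
    rw [Prod.lex_def] at h ⊢
    rcases h with h | ⟨h1, h2⟩
    · exact Or.inl (hηmono _ _ h)
    · exact Or.inr ⟨by simp only [] at h1 ⊢; rw [h1], hξmono _ _ h2⟩
  · rintro ⟨i, j⟩
    have key : ∀ s t, (bM.tensorProduct bN).repr
        (TensorProduct.map f g ((bM.tensorProduct bN) (i, j))) (s, t)
        = bM.repr (f (bM i)) s * bN.repr (g (bN j)) t := by
      intro s t
      rw [Module.Basis.tensorProduct_apply, TensorProduct.map_tmul,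
        Module.Basis.tensorProduct_repr_tmul_apply, smul_eq_mul, mul_comm]
    constructor
    · rw [key]
      exact mul_pos (hη i).1 (hξ j).1
    · rintro ⟨s, t⟩ h
      rw [Prod.lex_def] at h
      rw [key]
      rcases h with h | ⟨h1, h2⟩
      · rw [(hη i).2 s h, zero_mul]
      · rw [(hξ j).2 t h2, mul_zero]
end

section
/- Let F be the free group on generators {x_i | i ∈ I} with I nonempty, fix i₀ ∈ I, and let h : F → ℤ be the homomorphism with h(x_{i₀}) = 1 and h(x_j) = 0 for j ≠ i₀. Then the kernel K of h is a free group with free basis { x_{i₀}^j x_i x_{i₀}^{-j} | i ∈ I \ {i₀}, j ∈ ℤ }. -/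
/-- The homomorphism `h : F(I) → ℤ` with `h x_{i₀} = 1` and `h x_j = 0` for `j ≠ i₀`,
written multiplicatively. -/
def weightHom {I : Type*} [DecidableEq I] (i₀ : I) :
    FreeGroup I →* Multiplicative ℤ :=
  FreeGroup.lift fun i => Multiplicative.ofAdd (if i = i₀ then 1 else 0)

section Aux

variable {I : Type*} [DecidableEq I] (i₀ : I)

private abbrev X (i₀ : I) := {i : I // i ≠ i₀} × ℤ

/-- shift action on generators -/
private def shiftφ : Multiplicative ℤ →* MulAut (FreeGroup (X i₀)) where
  toFun n := FreeGroup.freeGroupCongr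
    (Equiv.prodCongr (Equiv.refl _) (Equiv.addRight (Multiplicative.toAdd n)))
  map_one' := by
    apply MulEquiv.toMonoidHom_injective
    apply FreeGroup.ext_hom
    intro a; simp
  map_mul' m n := by
    apply MulEquiv.toMonoidHom_injective
    apply FreeGroup.ext_hom
    rintro ⟨i, j⟩
    simp [Prod.map, add_comm, add_assoc, add_left_comm]

private def fG : FreeGroup (X i₀) →* FreeGroup I :=
  FreeGroup.lift fun p =>
    FreeGroup.of i₀ ^ p.2 * FreeGroup.of p.1.1 * FreeGroup.of i₀ ^ (-p.2)

private def fS : (FreeGroup (X i₀)) ⋊[shiftφ i₀] Multiplicative ℤ →* FreeGroup I :=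
  SemidirectProduct.lift (fG i₀) (zpowersHom _ (FreeGroup.of i₀)) (by
    intro n
    apply FreeGroup.ext_hom
    rintro ⟨i, j⟩
    simp only [fG, shiftφ, MonoidHom.comp_apply, MulEquiv.coe_toMonoidHom,
      MonoidHom.coe_mk, OneHom.coe_mk, FreeGroup.freeGroupCongr_apply,
      FreeGroup.map.of, FreeGroup.lift_apply_of, MulAut.conj_apply, zpowersHom_apply,
      Equiv.prodCongr_apply, Equiv.coe_refl, Prod.map_apply, id_eq, Equiv.coe_addRight]
    rw [zpow_add]
    group)

private def gS : FreeGroup I →* (FreeGroup (X i₀)) ⋊[shiftφ i₀] Multiplicative ℤ :=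
  FreeGroup.lift fun i =>
    if h : i = i₀ then SemidirectProduct.inr (Multiplicative.ofAdd 1)
    else SemidirectProduct.inl (FreeGroup.of (⟨i, h⟩, 0))

private lemma fS_gS : (fS i₀).comp (gS i₀) = MonoidHom.id _ := by
  apply FreeGroup.ext_hom
  intro i
  by_cases h : i = i₀ <;>
    simp [gS, fS, fG, h, FreeGroup.lift_apply_of]

private lemma gS_fG : (gS i₀).comp (fG i₀) = SemidirectProduct.inl := by
  apply FreeGroup.ext_hom
  rintro ⟨i, j⟩
  simp only [MonoidHom.comp_apply, fG, FreeGroup.lift_apply_of, map_mul, map_zpow, gS]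
  simp only [dite_true, dif_neg i.2]
  have h1 : (SemidirectProduct.inr (Multiplicative.ofAdd 1) :
      (FreeGroup (X i₀)) ⋊[shiftφ i₀] Multiplicative ℤ) ^ j
      = SemidirectProduct.inr (Multiplicative.ofAdd j) := by
    rw [← map_zpow]
    congr 1
    rw [← ofAdd_zsmul]; simp
  have h2 : (SemidirectProduct.inr (Multiplicative.ofAdd 1) :
      (FreeGroup (X i₀)) ⋊[shiftφ i₀] Multiplicative ℤ) ^ (-j)
      = (SemidirectProduct.inr (Multiplicative.ofAdd j))⁻¹ := by
    rw [← map_zpow, ← map_inv]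
    congr 1
    rw [← ofAdd_zsmul]; simp
  rw [h1, h2, ← map_inv, ← SemidirectProduct.inl_aut]
  simp [shiftφ, Prod.map]

private lemma weight_fS : (weightHom i₀).comp (fS i₀) = SemidirectProduct.rightHom := by
  apply SemidirectProduct.hom_ext
  · apply FreeGroup.ext_hom
    rintro ⟨i, j⟩
    simp only [MonoidHom.comp_apply, fS, SemidirectProduct.lift_inl, fG, FreeGroup.lift_apply_of,
      SemidirectProduct.rightHom_comp_inl, weightHom]
    rw [map_mul, map_mul, map_zpow, map_zpow, FreeGroup.lift_apply_of, FreeGroup.lift_apply_of]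
    rw [if_pos rfl, if_neg i.2]
    simp only [MonoidHom.one_apply]
    rw [← ofAdd_zsmul, ← ofAdd_zsmul]
    simp [← ofAdd_add]
  · apply MonoidHom.ext
    intro n
    simp only [MonoidHom.comp_apply, fS, SemidirectProduct.lift_inr, zpowersHom_apply,
      SemidirectProduct.rightHom_inr, map_zpow, weightHom, FreeGroup.lift_apply_of, if_pos rfl]
    rw [← ofAdd_zsmul]
    simp

end Aux

/-- The kernel of `h` is a free group with free basis
`{ x_{i₀}^j x_i x_{i₀}^{-j} | i ∈ I \ {i₀}, j ∈ ℤ }`. -/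
theorem stmt5 {I : Type*} [DecidableEq I] (i₀ : I) :
    ∃ e : FreeGroup ({i : I // i ≠ i₀} × ℤ) ≃* (weightHom i₀).ker,
      ∀ p : {i : I // i ≠ i₀} × ℤ,
        ((e (FreeGroup.of p) : (weightHom i₀).ker) : FreeGroup I) =
          FreeGroup.of i₀ ^ p.2 * FreeGroup.of p.1.1 * FreeGroup.of i₀ ^ (-p.2) := by
  have key : ∀ y : FreeGroup I, fS i₀ (gS i₀ y) = y :=
    fun y => DFunLike.congr_fun (fS_gS i₀) y
  have keyG : ∀ x : FreeGroup (X i₀), gS i₀ (fG i₀ x) = SemidirectProduct.inl x :=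
    fun x => DFunLike.congr_fun (gS_fG i₀) x
  have keyW : ∀ s, weightHom i₀ (fS i₀ s) = SemidirectProduct.rightHom s :=
    fun s => DFunLike.congr_fun (weight_fS i₀) s
  have mem_ker : ∀ x : FreeGroup (X i₀), fG i₀ x ∈ (weightHom i₀).ker := by
    intro x
    have h1 : fG i₀ x = fS i₀ (SemidirectProduct.inl x) := by simp [fS]
    have : weightHom i₀ (fG i₀ x) = 1 := by
      rw [h1, keyW, SemidirectProduct.rightHom_inl]
    exact this
  have hinj : Function.Injective (fG i₀) := by
    intro x y hxy
    have : gS i₀ (fG i₀ x) = gS i₀ (fG i₀ y) := congrArg _ hxy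
    rw [keyG, keyG] at this
    exact SemidirectProduct.inl_injective this
  have hsurj : ∀ k : FreeGroup I, k ∈ (weightHom i₀).ker → ∃ x, fG i₀ x = k := by
    intro k hk
    have hk' : weightHom i₀ k = 1 := hk
    have hr : SemidirectProduct.rightHom (gS i₀ k) = 1 := by
      rw [← keyW, key]; exact hk'
    have : gS i₀ k ∈ (SemidirectProduct.inl :
        FreeGroup (X i₀) →* _ ⋊[shiftφ i₀] Multiplicative ℤ).range := by
      rw [SemidirectProduct.range_inl_eq_ker_rightHom]
      exact hr
    obtain ⟨x, hx⟩ := this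
    refine ⟨x, ?_⟩
    have h1 : fG i₀ x = fS i₀ (SemidirectProduct.inl x) := by simp [fS]
    rw [h1, hx, key]
  refine ⟨MulEquiv.ofBijective
    ((fG i₀).codRestrict (weightHom i₀).ker mem_ker)
    ⟨fun x y hxy => hinj (congrArg Subtype.val hxy),
     fun k => by obtain ⟨x, hx⟩ := hsurj k.1 k.2; exact ⟨x, Subtype.ext hx⟩⟩, ?_⟩
  intro p
  simp [MulEquiv.ofBijective, fG, FreeGroup.lift_apply_of]
end

section
/- Let F be a free group with lower central series F = F₁ ⊇ F₂ ⊇ ⋯ defined by F_{k+1} = [F_k, F]. Let φ : F → F be an automorphism. Suppose that for every k ≥ 1 there is a bi-ordering <_k of the abelian group F_k/F_{k+1} that is invariant under the automorphism φ_k induced by φ. Then, using that ⋂_k F_k = {1}, the order defined by: a > 1 iff [a] >_{k(a)} 1 in F_{k(a)}/F_{k(a)+1}, where k(a) is the largest k with a ∈ F_k, is a bi-ordering of F invariant under φ. -/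
/-- Let `F` be a free group with lower central series `F_k = lowerCentralSeries F k`
(so `F_0 = F`, `F_{k+1} = [F_k, F]`), and `φ` an automorphism of `F`.  Suppose for each
`k` we are given a bi-ordering of the abelian quotient `F_k/F_{k+1}` invariant under the
automorphism induced by `φ`; we encode such a bi-ordering by the set `Q k ⊆ F_k` of
elements whose class in `F_k/F_{k+1}` is positive.  Then, using that `⋂_k F_k = {1}`
(the statement's cited fact, recorded here as the hypothesis `hres`), the set
`P = ⋃_k Q k` — i.e. `a > 1` iff the class of `a` in `F_{k(a)}/F_{k(a)+1}` is positive,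
where `k(a)` is the largest `k` with `a ∈ F_k` — is the positive cone of a bi-ordering
of `F` invariant under `φ`. -/
theorem stmt6 {α : Type*} (φ : FreeGroup α ≃* FreeGroup α)
    (hres : ∀ a : FreeGroup α, (∀ k : ℕ, a ∈ (⊤ : Subgroup (FreeGroup α)).lowerCentralSeries k) → a = 1)
    (Q : ℕ → Set (FreeGroup α))
    -- `Q k` consists of elements of `F_k` ...
    (hQsub : ∀ k : ℕ, Q k ⊆ ((⊤ : Subgroup (FreeGroup α)).lowerCentralSeries k : Set (FreeGroup α)))
    -- ... none of which lies in `F_{k+1}` (positivity of a class depends only on the class,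
    -- and the zero class is not positive):
    (hQdisj : ∀ k : ℕ, ∀ a ∈ Q k, a ∉ (⊤ : Subgroup (FreeGroup α)).lowerCentralSeries (k + 1))
    (hQcoset : ∀ k : ℕ, ∀ a ∈ Q k, ∀ b ∈ (⊤ : Subgroup (FreeGroup α)).lowerCentralSeries (k + 1),
      a * b ∈ Q k)
    -- positives are closed under the (abelian) group operation of `F_k/F_{k+1}`:
    (hQmul : ∀ k : ℕ, ∀ a ∈ Q k, ∀ b ∈ Q k, a * b ∈ Q k)
    -- each nonzero class of `F_k/F_{k+1}` is positive or negative, not both (totality):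
    (hQtot : ∀ k : ℕ, ∀ a ∈ (⊤ : Subgroup (FreeGroup α)).lowerCentralSeries k,
      a ∉ (⊤ : Subgroup (FreeGroup α)).lowerCentralSeries (k + 1) → a ∈ Q k ∨ a⁻¹ ∈ Q k)
    (hQasym : ∀ k : ℕ, ∀ a ∈ Q k, a⁻¹ ∉ Q k)
    -- the ordering of `F_k/F_{k+1}` is invariant under the automorphism induced by `φ`:
    (hQφ : ∀ k : ℕ, ∀ a : FreeGroup α, a ∈ Q k ↔ φ a ∈ Q k) :
    let P : Set (FreeGroup α) := ⋃ k : ℕ, Q k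
    (∀ a ∈ P, ∀ b ∈ P, a * b ∈ P) ∧
    (∀ a : FreeGroup α, a ≠ 1 → a ∈ P ∨ a⁻¹ ∈ P) ∧
    (∀ a ∈ P, a⁻¹ ∉ P) ∧
    ((1 : FreeGroup α) ∉ P) ∧
    (∀ g : FreeGroup α, ∀ a ∈ P, g * a * g⁻¹ ∈ P) ∧
    (∀ a : FreeGroup α, a ∈ P ↔ φ a ∈ P) := by

  intro P
  have hanti : ∀ {j k : ℕ}, j ≤ k →
      ((⊤ : Subgroup (FreeGroup α)).lowerCentralSeries k : Subgroup (FreeGroup α)) ≤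
        (⊤ : Subgroup (FreeGroup α)).lowerCentralSeries j := fun h => Subgroup.lowerCentralSeries_antitone _ h
  -- closure under multiplication
  have hmul : ∀ a ∈ P, ∀ b ∈ P, a * b ∈ P := by
    intro a ha b hb
    obtain ⟨_, ⟨j, rfl⟩, haj⟩ := ha
    obtain ⟨_, ⟨k, rfl⟩, hbk⟩ := hb
    rcases lt_trichotomy j k with h | rfl | h
    · refine Set.mem_iUnion.2 ⟨j, hQcoset j a haj b ?_⟩
      exact hanti h (hQsub k hbk)
    · exact Set.mem_iUnion.2 ⟨j, hQmul j a haj b hbk⟩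
    · refine Set.mem_iUnion.2 ⟨k, ?_⟩
      have : a * b = b * (b⁻¹ * a * b) := by group
      rw [this]
      refine hQcoset k b hbk _ ?_
      have ha' : a ∈ (⊤ : Subgroup (FreeGroup α)).lowerCentralSeries (k + 1) := hanti h (hQsub j haj)
      exact (inferInstance : ((⊤ : Subgroup (FreeGroup α)).lowerCentralSeries (k+1)).Normal).conj_mem' a ha' b
  refine ⟨hmul, ?_, ?_, ?_, ?_, ?_⟩
  · -- totality
    intro a ha
    have hex : ∃ n, a ∉ (⊤ : Subgroup (FreeGroup α)).lowerCentralSeries n := by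
      by_contra h
      push_neg at h
      exact ha (hres a h)
    classical
    have hnf : a ∉ (⊤ : Subgroup (FreeGroup α)).lowerCentralSeries (Nat.find hex) := Nat.find_spec hex
    have hn0 : Nat.find hex ≠ 0 := by
      intro h
      apply hnf
      rw [h]
      simp [Subgroup.lowerCentralSeries_zero]
    obtain ⟨k, hk'⟩ := Nat.exists_eq_succ_of_ne_zero hn0
    rw [hk'] at hnf
    have hk : a ∈ (⊤ : Subgroup (FreeGroup α)).lowerCentralSeries k := by
      by_contra h
      have := Nat.find_min' hex h
      omega
    rcases hQtot k a hk hnf with h | h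
    · exact Or.inl (Set.mem_iUnion.2 ⟨k, h⟩)
    · exact Or.inr (Set.mem_iUnion.2 ⟨k, h⟩)
  · -- asymmetry
    intro a ha hainv
    obtain ⟨_, ⟨j, rfl⟩, haj⟩ := ha
    obtain ⟨_, ⟨k, rfl⟩, hak⟩ := hainv
    have hjk : j = k := by
      by_contra h
      rcases lt_or_gt_of_ne h with h' | h'
      · exact hQdisj j a haj (hanti h' (((⊤ : Subgroup (FreeGroup α)).lowerCentralSeries k).inv_mem_iff.mp (hQsub k hak)))
      · exact hQdisj k a⁻¹ hak (hanti h' (((⊤ : Subgroup (FreeGroup α)).lowerCentralSeries j).inv_mem (hQsub j haj)))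
    subst hjk
    exact hQasym j a haj hak
  · -- 1 ∉ P
    intro h
    obtain ⟨_, ⟨k, rfl⟩, hk⟩ := h
    exact hQdisj k 1 hk (Subgroup.one_mem _)
  · -- conjugation invariance
    intro g a ha
    obtain ⟨_, ⟨k, rfl⟩, hak⟩ := ha
    refine Set.mem_iUnion.2 ⟨k, ?_⟩
    have heq : g * a * g⁻¹ = a * (a⁻¹ * g * a * g⁻¹) := by group
    rw [heq]
    refine hQcoset k a hak _ ?_
    open scoped commutatorElement in
    have : (a⁻¹ * g * a * g⁻¹) = ⁅a⁻¹, g⁆ := by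
      rw [commutatorElement_def]; group
    rw [this, Subgroup.lowerCentralSeries_succ]
    exact Subgroup.commutator_mem_commutator
      (((⊤ : Subgroup (FreeGroup α)).lowerCentralSeries k).inv_mem (hQsub k hak)) (Subgroup.mem_top g)
  · -- φ-invariance
    intro a
    constructor
    · rintro ⟨_, ⟨k, rfl⟩, hk⟩
      exact Set.mem_iUnion.2 ⟨k, (hQφ k a).1 hk⟩
    · rintro ⟨_, ⟨k, rfl⟩, hk⟩
      exact Set.mem_iUnion.2 ⟨k, (hQφ k a).2 hk⟩
end

section
/- Let σ ∈ S_n be a permutation with σ(n) ≠ n, where n ≥ 4. Then there exists τ ∈ S_{n-1} (a permutation of {1,…,n} fixing n) such that στ has cycle decomposition consisting of one fixed point i ∈ {1,…,n-2} and one (n-1)-cycle on the remaining n-1 elements. -/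
set_option maxHeartbeats 1000000



private lemma stmt10_aux_card (m : ℕ) (hm : 3 ≤ m) :
    (Fin.cycleRange (⟨m - 1, by omega⟩ : Fin (m+1))).support.card = m := by
  have h0 : (⟨m - 1, by omega⟩ : Fin (m+1)) ≠ 0 := by
    simp [Fin.ext_iff]; omega
  have h1 := Fin.cycleType_cycleRange h0
  have h2 := (Fin.isCycle_cycleRange h0).cycleType
  rw [h1] at h2
  have : ((m-1) + 1 : ℕ) = _ := Multiset.singleton_inj.mp (by simpa using h2)
  omega

/-- Let `σ ∈ S_n` (acting on `Fin n`, `n ≥ 4`) with `σ` not fixing the last point.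
Then there exists `τ` fixing the last point (i.e. `τ ∈ S_{n-1}`) such that `στ`
(composition acting first by `σ`, i.e. `τ * σ` in Mathlib's convention) has cycle
decomposition one fixed point `i` among the first `n - 2` points together with an
`(n-1)`-cycle on the remaining `n - 1` points. -/
theorem stmt10 (n : ℕ) (hn : 4 ≤ n) (σ : Equiv.Perm (Fin n))
    (hσ : σ ⟨n - 1, by omega⟩ ≠ ⟨n - 1, by omega⟩) :
    ∃ τ : Equiv.Perm (Fin n), τ ⟨n - 1, by omega⟩ = ⟨n - 1, by omega⟩ ∧
      ∃ i : Fin n, (i : ℕ) < n - 2 ∧ (τ * σ) i = i ∧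
        (τ * σ).IsCycle ∧ (τ * σ).support.card = n - 1 := by
  obtain ⟨m, rfl⟩ : ∃ m, n = m + 1 := ⟨n - 1, by omega⟩
  set L : Fin (m + 1) := ⟨m + 1 - 1, by omega⟩ with hL
  have hLval : (L : ℕ) = m := by simp [hL]
  -- b = σ⁻¹ L
  set b : Fin (m + 1) := σ⁻¹ L with hb
  have hbL : b ≠ L := by
    intro h
    apply hσ
    have := congrArg σ h
    exact (by simpa [hb] using this : L = σ L).symm
  -- choose i ∈ {0,1} with i ≠ b
  obtain ⟨i, hival, hib⟩ : ∃ i : Fin (m + 1), (i : ℕ) < m + 1 - 2 ∧ i ≠ b := by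
    by_cases h : b = ⟨0, by omega⟩
    · refine ⟨⟨1, by omega⟩, by simp; omega, ?_⟩
      rw [h]
      intro hc; exact absurd (congrArg Fin.val hc) (by simp)
    · exact ⟨⟨0, by omega⟩, by simp; omega, fun hc => h hc.symm⟩
  have hiL : i ≠ L := by
    intro h
    have := congrArg Fin.val h
    rw [hLval] at this
    omega
  -- the base cycle c0 on {0, ..., m-1}, fixing L = m
  set c0 : Equiv.Perm (Fin (m + 1)) := Fin.cycleRange ⟨m - 1, by omega⟩ with hc0
  have hc0cyc : c0.IsCycle := by
    apply Fin.isCycle_cycleRange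
    intro h
    have := congrArg Fin.val h
    simp [Fin.ext_iff] at this
    omega
  have hc0card : c0.support.card = m + 1 - 1 := by
    rw [hc0, stmt10_aux_card m (by omega)]; omega
  have hc0L : c0 L = L := by
    apply Fin.cycleRange_of_gt
    rw [Fin.lt_def]
    simp
    omega
  -- first conjugation: move fixed point to i
  set π' : Equiv.Perm (Fin (m + 1)) := Equiv.swap L i with hπ'
  set c1 : Equiv.Perm (Fin (m + 1)) := π' * c0 * π'⁻¹ with hc1
  have hc1i : c1 i = i := by
    rw [hc1]
    simp only [Equiv.Perm.mul_apply, hπ', Equiv.swap_inv]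
    rw [Equiv.swap_apply_right, hc0L, Equiv.swap_apply_left]
  -- c1 does not fix L
  have hc1L : c1 L ≠ L := by
    rw [hc1]
    simp only [Equiv.Perm.mul_apply, hπ', Equiv.swap_inv]
    rw [Equiv.swap_apply_left]
    have hilt : (i : ℕ) < m - 1 := by omega
    have hc0i : c0 i = ⟨(i : ℕ) + 1, by omega⟩ := by
      have hlt := Fin.cycleRange_of_lt (j := (⟨m - 1, by omega⟩ : Fin (m+1))) (i := i)
        (by rw [Fin.lt_def]; simpa using hilt)
      simp only [hc0]
      rw [hlt]
      apply Fin.ext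
      rw [Fin.val_add_one_of_lt (by rw [Fin.lt_def]; simp [Fin.last]; omega)]
    rw [hc0i]
    rw [Equiv.swap_apply_of_ne_of_ne (a := L) (b := i) (x := ⟨(i:ℕ)+1, by omega⟩)
      (by intro h; have := congrArg Fin.val h; simp [hLval] at this; omega)
      (by intro h; have := congrArg Fin.val h; simp at this)]
    intro h
    have := congrArg Fin.val h
    simp [hLval] at this
    omega
  -- second conjugation: force c (b) = L
  set x : Fin (m + 1) := c1⁻¹ L with hx
  have hxi : x ≠ i := by
    intro h
    rw [hx] at h
    have : L = c1 i := by rw [← h]; simp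
    rw [hc1i] at this
    exact hiL this.symm
  have hxL : x ≠ L := by
    intro h
    apply hc1L
    have h2 := congrArg c1 h
    rw [hx, Equiv.Perm.coe_inv, Equiv.apply_symm_apply] at h2
    exact h2.symm
  set π : Equiv.Perm (Fin (m + 1)) := Equiv.swap x b with hπ
  set c : Equiv.Perm (Fin (m + 1)) := π * c1 * π⁻¹ with hc
  have hci : c i = i := by
    rw [hc]
    simp only [Equiv.Perm.mul_apply, hπ, Equiv.swap_inv]
    rw [Equiv.swap_apply_of_ne_of_ne (Ne.symm hxi) hib, hc1i,
      Equiv.swap_apply_of_ne_of_ne (Ne.symm hxi) hib]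
  have hcb : c b = L := by
    rw [hc]
    simp only [Equiv.Perm.mul_apply, hπ, Equiv.swap_inv]
    rw [Equiv.swap_apply_right, hx]
    rw [show c1 (c1⁻¹ L) = L from c1.apply_symm_apply L]
    rw [Equiv.swap_apply_of_ne_of_ne (Ne.symm hxL) (Ne.symm hbL)]
  have hccyc : c.IsCycle := (hc0cyc.conj).conj
  have hccard : c.support.card = m + 1 - 1 := by
    rw [hc, Equiv.Perm.card_support_conj, hc1, Equiv.Perm.card_support_conj, hc0card]
  refine ⟨c * σ⁻¹, ?_, i, hival, ?_, ?_, ?_⟩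
  · show c (σ⁻¹ L) = L
    rw [← hb, hcb]
  · show (c * σ⁻¹ * σ) i = i
    rw [mul_assoc]
    simp [hci]
  · have : c * σ⁻¹ * σ = c := by group
    rw [this]; exact hccyc
  · have : c * σ⁻¹ * σ = c := by group
    rw [this]; exact hccard
end

section
/- Let K be the kernel of the homomorphism h : F → ℤ from the free group F on {x_i | i ∈ I} (I having at least two elements, i₀ ∈ I fixed) given by h(x_{i₀}) = 1, h(x_j) = 0 for j ≠ i₀. In the abelianization H = K/[K,K], written additively with basis elements A_{i,j} = class of x_{i₀}^j x_i x_{i₀}^{-j} (i ≠ i₀, j ∈ ℤ), conjugation by any α ∈ F satisfies: the class of α (x_{i₀}^j x_i x_{i₀}^{-j}) α⁻¹ in H equals A_{i, j + h(α)}. -/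
open FreeGroup

/-- In the abelianization `H = K/[K,K]` of the kernel `K` of `h`, with basis elements
`A_{i,j}` the classes of `x_{i₀}^j x_i x_{i₀}^{-j}` (`i ≠ i₀`, `j ∈ ℤ`), conjugation
by `α ∈ F` sends `A_{i,j}` to `A_{i, j + h(α)}`:  the class of
`α (x_{i₀}^j x_i x_{i₀}^{-j}) α⁻¹` equals the class of
`x_{i₀}^{j + h(α)} x_i x_{i₀}^{-(j + h(α))}`.  (The membership proofs `h1`, `h2` are
taken as hypotheses; both elements do indeed lie in `K`.) -/
theorem stmt15 {I : Type*} [DecidableEq I] (i₀ : I)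
    (α : FreeGroup I) (i : I) (hi : i ≠ i₀) (j : ℤ)
    (h1 : α * (of i₀ ^ j * of i * of i₀ ^ (-j)) * α⁻¹ ∈ (weightHom i₀).ker)
    (h2 : of i₀ ^ (j + Multiplicative.toAdd (weightHom i₀ α)) * of i *
        of i₀ ^ (-(j + Multiplicative.toAdd (weightHom i₀ α))) ∈ (weightHom i₀).ker) :
    Abelianization.of
        (⟨α * (of i₀ ^ j * of i * of i₀ ^ (-j)) * α⁻¹, h1⟩ : (weightHom i₀).ker) =
      Abelianization.of
        (⟨of i₀ ^ (j + Multiplicative.toAdd (weightHom i₀ α)) * of i *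
            of i₀ ^ (-(j + Multiplicative.toAdd (weightHom i₀ α))), h2⟩ :
          (weightHom i₀).ker) := by
  set n := Multiplicative.toAdd (weightHom i₀ α) with hn
  have hof : weightHom i₀ (of i₀) = Multiplicative.ofAdd 1 := by
    simp [weightHom]
  have hβ : α * of i₀ ^ (-n) ∈ (weightHom i₀).ker := by
    rw [MonoidHom.mem_ker, _root_.map_mul, _root_.map_zpow, hof]
    rw [hn]
    rw [← ofAdd_toAdd (weightHom i₀ α)]
    rw [← ofAdd_zsmul]
    simp [← ofAdd_add]
  set β : (weightHom i₀).ker := ⟨α * of i₀ ^ (-n), hβ⟩ with hβdef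
  have key : (⟨α * (of i₀ ^ j * of i * of i₀ ^ (-j)) * α⁻¹, h1⟩ : (weightHom i₀).ker)
      = β * (⟨of i₀ ^ (j + n) * of i * of i₀ ^ (-(j + n)), h2⟩ : (weightHom i₀).ker) * β⁻¹ := by
    ext
    simp only [hβdef, Subgroup.coe_mul, InvMemClass.coe_inv]
    group
  rw [key, _root_.map_mul, _root_.map_mul, _root_.map_inv]
  rw [mul_comm (Abelianization.of β)]
  rw [mul_assoc, mul_inv_cancel, mul_one]
end
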